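/- The epistemic logic program consisting of the rules { a ← not b. ; b ← not a. ; e ← not K f. ; f ← not K e. } has exactly two K15-world views: {{a,e},{b,e}} and {{a,f},{b,f}}. -/
import Mathlib


/- # A formalization of Epistemic Logic Programs (ELPs)

Atoms are drawn from an arbitrary type `α`.
An objective literal is an atom `a` or a default-negated atom `not a`.
A body literal is an objective literal, a subjective literal `K a`,
or a negated subjective literal `not K a`.
A rule has a head (a set of atoms, read disjunctively; the empty head is `⊥`,
i.e. the rule is a constraint) and a body (a set of body literals).
A program is a set of rules. -/

inductive OLit (α : Type) : Type where
  | pos : α → OLit α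
  | neg : α → OLit α

inductive BLit (α : Type) : Type where
  | obj : OLit α → BLit α
  | k   : α → BLit α
  | nk  : α → BLit α

structure Rule (α : Type) : Type where
  head : Set α
  body : Set (BLit α)

abbrev Program (α : Type) : Type := Set (Rule α)

variable {α : Type}

def BLit.atom : BLit α → α
  | .obj (.pos a) => a
  | .obj (.neg a) => a
  | .k a => a
  | .nk a => a

def BLit.isObj : BLit α → Prop
  | .obj _ => True
  | _ => False

def Rule.posBody (r : Rule α) : Set α := {a | BLit.obj (OLit.pos a) ∈ r.body}
def Rule.negBody (r : Rule α) : Set α := {a | BLit.obj (OLit.neg a) ∈ r.body}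
def Rule.bodyObjAtoms (r : Rule α) : Set α := r.posBody ∪ r.negBody
def Rule.bodySubjAtoms (r : Rule α) : Set α :=
  {a | BLit.k a ∈ r.body ∨ BLit.nk a ∈ r.body}
def Rule.atoms (r : Rule α) : Set α := r.head ∪ BLit.atom '' r.body
def Rule.Objective (r : Rule α) : Prop := ∀ l ∈ r.body, l.isObj
def Rule.Subjective (r : Rule α) : Prop := ∀ l ∈ r.body, ¬ l.isObj

def Program.atoms (P : Program α) : Set α := ⋃ r ∈ P, Rule.atoms r
def Program.objAtoms (P : Program α) : Set α := ⋃ r ∈ P, (r.head ∪ r.bodyObjAtoms)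
def Program.Objective (P : Program α) : Prop := ∀ r ∈ P, r.Objective

/-- `W ⊨ K a` : `a` belongs to every member of `W`. -/
def KSat (W : Set (Set α)) (a : α) : Prop := ∀ I ∈ W, a ∈ I

def satOLit (I : Set α) : OLit α → Prop
  | .pos a => a ∈ I
  | .neg a => a ∉ I

def satBLit (W : Set (Set α)) (I : Set α) : BLit α → Prop
  | .obj l => satOLit I l
  | .k a => KSat W a
  | .nk a => ¬ KSat W a

/-- A positive rule, given as (head, positive body), is classically satisfied by `J`. -/
def ModelsPosRule (J : Set α) (hb : Set α × Set α) : Prop :=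
  hb.2 ⊆ J → (hb.1 ∩ J).Nonempty

/-- The Gelfond–Lifschitz reduct `P^I` of an (objective) program:
remove every rule whose body contains some `not a` with `a ∈ I`,
and delete all negative literals from the remaining rules;
the reduct is represented as a set of positive rules (head, positive body). -/
def GLReduct (P : Program α) (I : Set α) : Set (Set α × Set α) :=
  {hb | ∃ r ∈ P, (∀ a ∈ r.negBody, a ∉ I) ∧ hb = (r.head, r.posBody)}

def ModelsReduct (J : Set α) (R : Set (Set α × Set α)) : Prop :=
  ∀ hb ∈ R, ModelsPosRule J hb

/-- `I` is an answer set (stable model) of `P` iff `I` is a minimal model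
(w.r.t. `⊆`) of the Gelfond–Lifschitz reduct `P^I`. -/
def StableModel (P : Program α) (I : Set α) : Prop :=
  ModelsReduct I (GLReduct P I) ∧ ∀ J ⊆ I, ModelsReduct J (GLReduct P I) → J = I

/-- Body of a rule after taking the K15-reduct w.r.t. `W`:
objective literals are kept; `K a` (in a kept rule, i.e. with `W ⊨ K a`)
is replaced by `a`; in `not K a`, the inner `K a` is replaced by `⊥`
(so the literal becomes `⊤` and disappears) when `W ⊭ K a`,
and by `a` (so the literal becomes `not a`) when `W ⊨ K a`. -/
def K15ReductBody (W : Set (Set α)) (b : Set (BLit α)) : Set (BLit α) :=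
  {l | (∃ ol, BLit.obj ol ∈ b ∧ l = BLit.obj ol)
     ∨ (∃ a, BLit.k a ∈ b ∧ l = BLit.obj (OLit.pos a))
     ∨ (∃ a, BLit.nk a ∈ b ∧ KSat W a ∧ l = BLit.obj (OLit.neg a))}

/-- The K15-reduct of `P` w.r.t. `W`: every subjective literal `K a` with
`W ⊭ K a` is replaced by `⊥` (hence a rule with such a literal positively in
its body can never fire and is removed), and all remaining occurrences of
`K a` are replaced by `a`. -/
def K15Reduct (P : Program α) (W : Set (Set α)) : Program α :=
  {r' | ∃ r ∈ P, (∀ a, BLit.k a ∈ r.body → KSat W a) ∧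
        r'.head = r.head ∧ r'.body = K15ReductBody W r.body}

/-- A non-empty `W` is a K15-world view of `P` iff `W` equals the set of all
stable models of the K15-reduct of `P` w.r.t. `W`. -/
def K15WorldView (P : Program α) (W : Set (Set α)) : Prop :=
  W.Nonempty ∧ W = {I | StableModel (K15Reduct P W) I}

/-- Epistemic stratification (Cabalar et al., Def. 6). -/
def EpistemicallyStratified (P : Program α) : Prop :=
  ∃ lam : α → ℤ,
    (∀ r ∈ P, ∀ a ∈ Rule.atoms r \ Rule.bodySubjAtoms r,
        ∀ b ∈ Rule.atoms r \ Rule.bodySubjAtoms r, lam a = lam b) ∧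
    (∀ r ∈ P, ∀ a ∈ r.head ∪ r.bodyObjAtoms, ∀ b ∈ Rule.bodySubjAtoms r, lam b < lam a)

inductive At : Type where
  | a | b | e | f

/-- The ELP { a ← not b. ; b ← not a. ; e ← not K f. ; f ← not K e. } -/
def P10 : Program At :=
  { ⟨{At.a}, {BLit.obj (OLit.neg At.b)}⟩,
    ⟨{At.b}, {BLit.obj (OLit.neg At.a)}⟩,
    ⟨{At.e}, {BLit.nk At.f}⟩,
    ⟨{At.f}, {BLit.nk At.e}⟩ }

set_option linter.constructorNameAsVariable false
deriving instance DecidableEq for At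

lemma mem_glr (W : Set (Set At)) (I : Set At) (hb : Set At × Set At) :
    hb ∈ GLReduct (K15Reduct P10 W) I ↔
      (hb = ({At.a}, ∅) ∧ At.b ∉ I) ∨ (hb = ({At.b}, ∅) ∧ At.a ∉ I) ∨
      (hb = ({At.e}, ∅) ∧ (KSat W At.f → At.f ∉ I)) ∨
      (hb = ({At.f}, ∅) ∧ (KSat W At.e → At.e ∉ I)) := by
  constructor
  · rintro ⟨r', ⟨r, hr, -, hh, hbody⟩, hneg, rfl⟩
    simp only [P10, Set.mem_insert_iff, Set.mem_singleton_iff] at hr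
    have hpos : ∀ a, a ∈ r'.posBody ↔ BLit.obj (OLit.pos a) ∈ K15ReductBody W r.body := by
      intro a; rw [Rule.posBody, Set.mem_setOf_eq, hbody]
    have hneg' : ∀ a, a ∈ r'.negBody ↔ BLit.obj (OLit.neg a) ∈ K15ReductBody W r.body := by
      intro a; rw [Rule.negBody, Set.mem_setOf_eq, hbody]
    rcases hr with rfl | rfl | rfl | rfl
    · refine Or.inl ⟨?_, ?_⟩
      · rw [Prod.ext_iff]; refine ⟨hh, ?_⟩
        ext a; simp [hpos, K15ReductBody]
      · refine hneg At.b ?_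
        rw [hneg']; simp [K15ReductBody]
    · refine Or.inr (Or.inl ⟨?_, ?_⟩)
      · rw [Prod.ext_iff]; refine ⟨hh, ?_⟩
        ext a; simp [hpos, K15ReductBody]
      · refine hneg At.a ?_
        rw [hneg']; simp [K15ReductBody]
    · refine Or.inr (Or.inr (Or.inl ⟨?_, ?_⟩))
      · rw [Prod.ext_iff]; refine ⟨hh, ?_⟩
        ext a; simp [hpos, K15ReductBody]
      · intro hK
        refine hneg At.f ?_
        rw [hneg']; simp [K15ReductBody, hK]
    · refine Or.inr (Or.inr (Or.inr ⟨?_, ?_⟩))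
      · rw [Prod.ext_iff]; refine ⟨hh, ?_⟩
        ext a; simp [hpos, K15ReductBody]
      · intro hK
        refine hneg At.e ?_
        rw [hneg']; simp [K15ReductBody, hK]
  · intro h
    rcases h with ⟨rfl, hc⟩ | ⟨rfl, hc⟩ | ⟨rfl, hc⟩ | ⟨rfl, hc⟩
    · refine ⟨⟨{At.a}, K15ReductBody W {BLit.obj (OLit.neg At.b)}⟩,
        ⟨⟨{At.a}, {BLit.obj (OLit.neg At.b)}⟩, by simp [P10], by simp, rfl, rfl⟩, ?_, ?_⟩
      · intro a ha
        simp [Rule.negBody, K15ReductBody] at ha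
        subst ha; exact hc
      · refine Prod.ext rfl ?_
        ext a; simp [Rule.posBody, K15ReductBody]
    · refine ⟨⟨{At.b}, K15ReductBody W {BLit.obj (OLit.neg At.a)}⟩,
        ⟨⟨{At.b}, {BLit.obj (OLit.neg At.a)}⟩, by simp [P10], by simp, rfl, rfl⟩, ?_, ?_⟩
      · intro a ha
        simp [Rule.negBody, K15ReductBody] at ha
        subst ha; exact hc
      · refine Prod.ext rfl ?_
        ext a; simp [Rule.posBody, K15ReductBody]
    · refine ⟨⟨{At.e}, K15ReductBody W {BLit.nk At.f}⟩,
        ⟨⟨{At.e}, {BLit.nk At.f}⟩, by simp [P10], by simp, rfl, rfl⟩, ?_, ?_⟩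
      · intro a ha
        simp [Rule.negBody, K15ReductBody] at ha
        rcases ha with ⟨hK, rfl⟩; exact hc hK
      · refine Prod.ext rfl ?_
        ext a; simp [Rule.posBody, K15ReductBody]
    · refine ⟨⟨{At.f}, K15ReductBody W {BLit.nk At.e}⟩,
        ⟨⟨{At.f}, {BLit.nk At.e}⟩, by simp [P10], by simp, rfl, rfl⟩, ?_, ?_⟩
      · intro a ha
        simp [Rule.negBody, K15ReductBody] at ha
        rcases ha with ⟨hK, rfl⟩; exact hc hK
      · refine Prod.ext rfl ?_
        ext a; simp [Rule.posBody, K15ReductBody]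

/-- The "consequence operator" value for this program. -/
def S10 (W : Set (Set At)) (I : Set At) : Set At :=
  {x | (x = At.a ∧ At.b ∉ I) ∨ (x = At.b ∧ At.a ∉ I) ∨
       (x = At.e ∧ (KSat W At.f → At.f ∉ I)) ∨
       (x = At.f ∧ (KSat W At.e → At.e ∉ I))}

lemma stable_iff (W : Set (Set At)) (I : Set At) :
    StableModel (K15Reduct P10 W) I ↔ I = S10 W I := by
  have fact_mem : ∀ x ∈ S10 W I, (({x} : Set At), (∅ : Set At)) ∈ GLReduct (K15Reduct P10 W) I := by
    intro x hx
    rcases hx with ⟨rfl, hc⟩ | ⟨rfl, hc⟩ | ⟨rfl, hc⟩ | ⟨rfl, hc⟩ <;> rw [mem_glr]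
    · exact Or.inl ⟨rfl, hc⟩
    · exact Or.inr (Or.inl ⟨rfl, hc⟩)
    · exact Or.inr (Or.inr (Or.inl ⟨rfl, hc⟩))
    · exact Or.inr (Or.inr (Or.inr ⟨rfl, hc⟩))
  have mem_of_models : ∀ J : Set At, ModelsReduct J (GLReduct (K15Reduct P10 W) I) →
      ∀ x ∈ S10 W I, x ∈ J := by
    intro J hJ x hx
    have h : ({x} ∩ J).Nonempty := hJ _ (fact_mem x hx) (Set.empty_subset J)
    rcases h with ⟨y, hy1, hy2⟩
    rcases hy1 with rfl
    exact hy2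
  have models_S : ∀ J : Set At, S10 W I ⊆ J → ModelsReduct J (GLReduct (K15Reduct P10 W) I) := by
    intro J hJ hb hbmem _
    rw [mem_glr] at hbmem
    rcases hbmem with ⟨rfl, hc⟩ | ⟨rfl, hc⟩ | ⟨rfl, hc⟩ | ⟨rfl, hc⟩
    · exact ⟨At.a, rfl, hJ (Or.inl ⟨rfl, hc⟩)⟩
    · exact ⟨At.b, rfl, hJ (Or.inr (Or.inl ⟨rfl, hc⟩))⟩
    · exact ⟨At.e, rfl, hJ (Or.inr (Or.inr (Or.inl ⟨rfl, hc⟩)))⟩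
    · exact ⟨At.f, rfl, hJ (Or.inr (Or.inr (Or.inr ⟨rfl, hc⟩)))⟩
  constructor
  · rintro ⟨hmod, hmin⟩
    exact (hmin (S10 W I) (mem_of_models I hmod) (models_S _ (fun x hx => hx))).symm
  · intro hI
    refine ⟨models_S I (le_of_eq hI.symm), fun J hJI hJ => ?_⟩
    refine Set.Subset.antisymm hJI ?_
    rw [hI]
    intro x hx
    exact mem_of_models J hJ x hx

lemma stable_char_ef (W : Set (Set At)) (hKe : KSat W At.e) (hKf : ¬ KSat W At.f)
    (I : Set At) :
    StableModel (K15Reduct P10 W) I ↔ I = {At.a, At.e} ∨ I = {At.b, At.e} := by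
  rw [stable_iff]
  constructor
  · intro hI
    have he : At.e ∈ I := by
      rw [hI]; exact Or.inr (Or.inr (Or.inl ⟨rfl, fun h => absurd h hKf⟩))
    have hf : At.f ∉ I := by
      intro hf; rw [hI] at hf
      rcases hf with ⟨h, -⟩ | ⟨h, -⟩ | ⟨h, -⟩ | ⟨-, h⟩
      · exact At.noConfusion h
      · exact At.noConfusion h
      · exact At.noConfusion h
      · exact h hKe he
    by_cases ha : At.a ∈ I
    · left; ext x; constructor
      · intro hx; rw [hI] at hx
        rcases hx with ⟨rfl, -⟩ | ⟨rfl, hb⟩ | ⟨rfl, -⟩ | ⟨rfl, hc⟩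
        · exact Or.inl rfl
        · exact absurd ha hb
        · exact Or.inr rfl
        · exact absurd he (hc hKe)
      · rintro (rfl | rfl)
        · exact ha
        · exact he
    · right
      have hbmem : At.b ∈ I := by rw [hI]; exact Or.inr (Or.inl ⟨rfl, ha⟩)
      ext x; constructor
      · intro hx; have hx' := hx; rw [hI] at hx'
        rcases hx' with ⟨rfl, -⟩ | ⟨rfl, -⟩ | ⟨rfl, -⟩ | ⟨rfl, hc⟩
        · exact absurd hx ha
        · exact Or.inl rfl
        · exact Or.inr rfl
        · exact absurd he (hc hKe)
      · rintro (rfl | rfl)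
        · exact hbmem
        · exact he
  · rintro (rfl | rfl) <;> (ext x; cases x <;> simp [S10, hKe, hKf])

lemma stable_char_fe (W : Set (Set At)) (hKf : KSat W At.f) (hKe : ¬ KSat W At.e)
    (I : Set At) :
    StableModel (K15Reduct P10 W) I ↔ I = {At.a, At.f} ∨ I = {At.b, At.f} := by
  rw [stable_iff]
  constructor
  · intro hI
    have hfm : At.f ∈ I := by
      rw [hI]; exact Or.inr (Or.inr (Or.inr ⟨rfl, fun h => absurd h hKe⟩))
    have hem : At.e ∉ I := by
      intro hem; rw [hI] at hem
      rcases hem with ⟨h, -⟩ | ⟨h, -⟩ | ⟨-, h⟩ | ⟨h, -⟩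
      · exact At.noConfusion h
      · exact At.noConfusion h
      · exact h hKf hfm
      · exact At.noConfusion h
    by_cases ha : At.a ∈ I
    · left; ext x; constructor
      · intro hx; rw [hI] at hx
        rcases hx with ⟨rfl, -⟩ | ⟨rfl, hb⟩ | ⟨rfl, hc⟩ | ⟨rfl, -⟩
        · exact Or.inl rfl
        · exact absurd ha hb
        · exact absurd hfm (hc hKf)
        · exact Or.inr rfl
      · rintro (rfl | rfl)
        · exact ha
        · exact hfm
    · right
      have hbmem : At.b ∈ I := by rw [hI]; exact Or.inr (Or.inl ⟨rfl, ha⟩)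
      ext x; constructor
      · intro hx; have hx' := hx; rw [hI] at hx'
        rcases hx' with ⟨rfl, -⟩ | ⟨rfl, -⟩ | ⟨rfl, hc⟩ | ⟨rfl, -⟩
        · exact absurd hx ha
        · exact Or.inl rfl
        · exact absurd hfm (hc hKf)
        · exact Or.inr rfl
      · rintro (rfl | rfl)
        · exact hbmem
        · exact hfm
  · rintro (rfl | rfl) <;> (ext x; cases x <;> simp [S10, hKe, hKf])

theorem p10_world_views' (W : Set (Set At)) :
    K15WorldView P10 W ↔
      W = {{At.a, At.e}, {At.b, At.e}} ∨ W = {{At.a, At.f}, {At.b, At.f}} := by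
  constructor
  · rintro ⟨hne, hW⟩
    by_cases hKe : KSat W At.e <;> by_cases hKf : KSat W At.f
    · exfalso
      have hst : StableModel (K15Reduct P10 W) {At.a, At.f} := by
        rw [stable_iff]; ext x; cases x <;> simp [S10, hKe, hKf]
      have hmem : ({At.a, At.f} : Set At) ∈ W := by rw [hW]; exact hst
      have := hKe _ hmem
      simp at this
    · left
      rw [hW]; ext I
      simp only [Set.mem_setOf_eq, Set.mem_insert_iff, Set.mem_singleton_iff]
      exact stable_char_ef W hKe hKf I
    · right
      rw [hW]; ext I
      simp only [Set.mem_setOf_eq, Set.mem_insert_iff, Set.mem_singleton_iff]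
      exact stable_char_fe W hKf hKe I
    · exfalso
      apply hKf
      intro I hI
      rw [hW, Set.mem_setOf_eq, stable_iff] at hI
      rw [hI]
      exact Or.inr (Or.inr (Or.inr ⟨rfl, fun h => absurd h hKe⟩))
  · rintro (rfl | rfl)
    · refine ⟨⟨_, Or.inl rfl⟩, ?_⟩
      have hKe : KSat {{At.a, At.e}, {At.b, At.e}} At.e := by
        intro I hI
        simp only [Set.mem_insert_iff, Set.mem_singleton_iff] at hI
        rcases hI with rfl | rfl <;> simp
      have hKf : ¬ KSat {{At.a, At.e}, {At.b, At.e}} At.f := by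
        intro h
        have := h {At.a, At.e} (Or.inl rfl)
        simp at this
      ext I
      simp only [Set.mem_setOf_eq, Set.mem_insert_iff, Set.mem_singleton_iff]
      exact (stable_char_ef _ hKe hKf I).symm
    · refine ⟨⟨_, Or.inl rfl⟩, ?_⟩
      have hKf : KSat {{At.a, At.f}, {At.b, At.f}} At.f := by
        intro I hI
        simp only [Set.mem_insert_iff, Set.mem_singleton_iff] at hI
        rcases hI with rfl | rfl <;> simp
      have hKe : ¬ KSat {{At.a, At.f}, {At.b, At.f}} At.e := by
        intro h
        have := h {At.a, At.f} (Or.inl rfl)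
        simp at this
      ext I
      simp only [Set.mem_setOf_eq, Set.mem_insert_iff, Set.mem_singleton_iff]
      exact (stable_char_fe _ hKf hKe I).symm

/-- this program has exactly two K15-world views:
{{a,e},{b,e}} and {{a,f},{b,f}}. -/
theorem p10_world_views (W : Set (Set At)) :
    K15WorldView P10 W ↔
      W = {{At.a, At.e}, {At.b, At.e}} ∨ W = {{At.a, At.f}, {At.b, At.f}} := by
  exact p10_world_views' W
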